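/- Let N ≥ 1 be an integer, M ≥ N an integer, and s ∈ (0,1). Suppose that for every n ≥ 1 and every sequence of integers (ε_1, …, ε_{n−1}) ∈ {N, …, M}^{n−1} one has |I_{n−1}(ε_1, …, ε_{n−1})|^s ≥ Σ_{k=N}^{M} |I_n(ε_1, …, ε_{n−1}, k)|^s. Then dim_H(E_M) ≤ s. -/

import Mathlib

open MeasureTheory Filter Set
open scoped ENNReal

/-- The `N`-expansion map `T_N : [0,1] → [0,1]`,
`T_N x = N/x - ⌊N/x⌋` for `x ≠ 0`, `T_N 0 = 0`. -/
noncomputable def TN (N : ℕ) (x : ℝ) : ℝ :=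
  if x = 0 then 0 else (N : ℝ) / x - (⌊(N : ℝ) / x⌋ : ℝ)

/-- `digit N n x` is the `(n+1)`-st digit `ε_{n+1}(x)` of the `N`-expansion of `x`,
i.e. `ε_m(x) = digit N (m-1) x` for `m ≥ 1`. -/
noncomputable def digit (N : ℕ) (n : ℕ) (x : ℝ) : ℤ :=
  ⌊(N : ℝ) / ((TN N)^[n] x)⌋

/-- The set `E_M` of irrationals in `(0,1)` all of whose `N`-expansion digits lie in
`{N, …, M}`. -/
noncomputable def EM (N M : ℕ) : Set ℝ :=
  {x | x ∈ Set.Ioo (0 : ℝ) 1 ∧ Irrational x ∧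
    ∀ n : ℕ, (N : ℤ) ≤ digit N n x ∧ digit N n x ≤ (M : ℤ)}

/-- The set `F_{α,N}` of irrationals in `(0,1)` all of whose `N`-expansion digits
are at least `α`. -/
noncomputable def Fset (N : ℕ) (α : ℝ) : Set ℝ :=
  {x | x ∈ Set.Ioo (0 : ℝ) 1 ∧ Irrational x ∧ ∀ n : ℕ, α ≤ (digit N n x : ℝ)}

/-- The set `F_N` of irrationals in `(0,1)` whose `N`-expansion digits tend to infinity. -/
noncomputable def FNset (N : ℕ) : Set ℝ :=
  {x | x ∈ Set.Ioo (0 : ℝ) 1 ∧ Irrational x ∧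
    Filter.Tendsto (fun n => digit N n x) Filter.atTop Filter.atTop}

/-- Convergent denominators of the `N`-expansion with digit sequence `ε`
(where `ε i` is the `(i+1)`-st digit `ε_{i+1}`), shifted by one:
`qden N ε (n+1) = q_n`, so `qden N ε 0 = q_{-1} = 0`, `qden N ε 1 = q_0 = 1`,
and `q_n = ε_n q_{n-1} + N q_{n-2}`. -/
def qden (N : ℕ) (ε : ℕ → ℤ) : ℕ → ℤ
  | 0 => 0
  | 1 => 1
  | (n + 2) => ε n * qden N ε (n + 1) + (N : ℤ) * qden N ε n

/-- Convergent numerators of the `N`-expansion with digit sequence `ε`, shifted by one: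
`pnum N ε (n+1) = p_n`, so `pnum N ε 0 = p_{-1} = 1`, `pnum N ε 1 = p_0 = 0`,
and `p_n = ε_n p_{n-1} + N p_{n-2}`. -/
def pnum (N : ℕ) (ε : ℕ → ℤ) : ℕ → ℤ
  | 0 => 1
  | 1 => 0
  | (n + 2) => ε n * pnum N ε (n + 1) + (N : ℤ) * pnum N ε n

/-- The fundamental interval `I_n(ε_1, …, ε_n)`: irrationals in `(0,1)` whose first `n`
`N`-expansion digits are `ε 0, …, ε (n-1)` (i.e. `ε_i(x) = ε (i-1)` for `1 ≤ i ≤ n`). -/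
noncomputable def fundInterval (N : ℕ) (n : ℕ) (ε : ℕ → ℤ) : Set ℝ :=
  {x | x ∈ Set.Ioo (0 : ℝ) 1 ∧ Irrational x ∧ ∀ i < n, digit N i x = ε i}

/-!
Cover `E_M` at level `n` by the fundamental intervals `I_n(w)`, `w ∈ {N, …, M}ⁿ`. Each of them
contains every irrational lying between two of its points, so its diameter is at most its length;
iterating the hypothesis from `|I_0| = 1` then gives `∑_w diam(I_n(w))^s ≤ 1`. Since
`x = N / (ε_1(x) + T_N x)` with `ε_1(x) ≥ N`, and `T_N x > N / (M + 1)` as soon as `ε_2(x) ≤ M`,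
the inverse branches of `T_N` contract by `((M + 1) / (M + 2))²` on these intervals, so the covers
become arbitrarily fine. Hence `μH[s](E_M) ≤ 1` and `dim_H E_M ≤ s`.
-/

open Metric Topology

section Dynamics

variable {N : ℕ} {x : ℝ}

lemma digit_zero (N : ℕ) (x : ℝ) : digit N 0 x = ⌊(N : ℝ) / x⌋ := rfl

lemma digit_succ (N i : ℕ) (x : ℝ) : digit N (i + 1) x = digit N i (TN N x) := by
  simp [digit, Function.iterate_succ_apply]

lemma TN_eq_sub_digit (hx : x ≠ 0) : TN N x = N / x - digit N 0 x := by
  simp [TN, hx, digit_zero]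

lemma digit_zero_antitone {y : ℝ} (hx : 0 < x) (hxy : x ≤ y) : digit N 0 y ≤ digit N 0 x :=
  Int.floor_le_floor (div_le_div_of_nonneg_left (Nat.cast_nonneg N) hx hxy)

lemma le_digit_zero (hx : x ∈ Ioo (0 : ℝ) 1) : (N : ℤ) ≤ digit N 0 x := by
  rw [digit_zero, Int.le_floor, Int.cast_natCast]
  exact le_div_self (Nat.cast_nonneg N) hx.1 hx.2.le

lemma div_lt_of_digit_zero_le {M : ℕ} (hx : 0 < x) (hM : digit N 0 x ≤ M) :
    (N : ℝ) / (M + 1) < x := by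
  have h : (N : ℝ) / x < M + 1 := by
    have := Int.lt_floor_add_one ((N : ℝ) / x)
    have : (digit N 0 x : ℝ) ≤ M := by exact_mod_cast hM
    rw [digit_zero] at *
    linarith
  rw [div_lt_iff₀ hx] at h
  rw [div_lt_iff₀ (by positivity)]
  linarith

lemma eq_div_digit_zero_add_TN (hN : N ≠ 0) (hx : x ≠ 0) : x = N / (digit N 0 x + TN N x) := by
  rw [TN_eq_sub_digit hx, add_sub_cancel, div_div_cancel₀ (by exact_mod_cast hN)]

lemma TN_mem_Ioo (hN : N ≠ 0) (hx : x ∈ Ioo (0 : ℝ) 1) (hirr : Irrational x) :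
    TN N x ∈ Ioo (0 : ℝ) 1 := by
  have hdiv : Irrational (N / x) := hirr.natCast_div hN
  rw [TN_eq_sub_digit hx.1.ne', digit_zero]
  refine ⟨sub_pos.2 (lt_of_le_of_ne (Int.floor_le _) fun h => ?_), ?_⟩
  · exact hdiv.ne_int _ h.symm
  · linarith [Int.lt_floor_add_one ((N : ℝ) / x)]

lemma irrational_TN (hN : N ≠ 0) (hx : x ≠ 0) (hirr : Irrational x) : Irrational (TN N x) := by
  rw [TN_eq_sub_digit hx]
  exact (hirr.natCast_div hN).sub_intCast _

lemma mem_fundInterval_succ_iff (hN : N ≠ 0) {n : ℕ} {ε : ℕ → ℤ} :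
    x ∈ fundInterval N (n + 1) ε ↔ x ∈ Ioo (0 : ℝ) 1 ∧ Irrational x ∧ digit N 0 x = ε 0 ∧
      TN N x ∈ fundInterval N n (fun i => ε (i + 1)) := by
  simp only [fundInterval, mem_ofPred_eq, Nat.forall_lt_succ_left, ← digit_succ]
  constructor
  · rintro ⟨hx, hirr, h0, hsucc⟩
    exact ⟨hx, hirr, h0, TN_mem_Ioo hN hx hirr, irrational_TN hN hx.1.ne' hirr, hsucc⟩
  · rintro ⟨hx, hirr, h0, -, -, hsucc⟩
    exact ⟨hx, hirr, h0, hsucc⟩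

end Dynamics

noncomputable def contractionRatio (M : ℕ) : ℝ := ((M + 1) / (M + 2)) ^ 2

lemma contractionRatio_pos (M : ℕ) : 0 < contractionRatio M := by
  unfold contractionRatio; positivity

lemma contractionRatio_lt_one (M : ℕ) : contractionRatio M < 1 := by
  unfold contractionRatio
  have : ((M : ℝ) + 1) / (M + 2) < 1 := (div_lt_one (by positivity)).2 (by linarith)
  nlinarith [div_nonneg (by positivity : (0 : ℝ) ≤ M + 1) (by positivity : (0 : ℝ) ≤ M + 2)]

lemma abs_div_add_sub_div_add_le {N M : ℕ} (hN : 1 ≤ N) {a u v : ℝ} (ha : N ≤ a)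
    (hu : (N : ℝ) / (M + 1) < u) (hv : (N : ℝ) / (M + 1) < v) :
    |N / (a + u) - N / (a + v)| ≤ contractionRatio M * |u - v| := by
  have hN' : (1 : ℝ) ≤ N := by exact_mod_cast hN
  have hL0 : 0 < N + N / ((M : ℝ) + 1) := by positivity
  have hau : 0 < a + u := by linarith
  have hav : 0 < a + v := by linarith
  have hratio : N / ((N + N / ((M : ℝ) + 1)) ^ 2) = contractionRatio M / N := by
    rw [contractionRatio]; field_simp; ring
  calc |N / (a + u) - N / (a + v)| = N / ((a + u) * (a + v)) * |u - v| := by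
        rw [div_sub_div _ _ hau.ne' hav.ne', abs_div, abs_of_pos (mul_pos hau hav),
          show N * (a + v) - (a + u) * N = N * (v - u) by ring, abs_mul, Nat.abs_cast,
          abs_sub_comm]
        ring
    _ ≤ N / ((N + N / ((M : ℝ) + 1)) ^ 2) * |u - v| := by
        gcongr
        rw [sq]
        exact mul_le_mul (by linarith) (by linarith) hL0.le hau.le
    _ ≤ contractionRatio M * |u - v| := by
        rw [hratio]
        gcongr
        exact div_le_self (contractionRatio_pos M).le hN'

lemma abs_sub_le_of_mem_fundInterval {N M : ℕ} (hN : 1 ≤ N) {n : ℕ} {ε : ℕ → ℤ}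
    (hε : ∀ i ≤ n, ε i ≤ M) {x y : ℝ} (hx : x ∈ fundInterval N (n + 1) ε)
    (hy : y ∈ fundInterval N (n + 1) ε) : |x - y| ≤ contractionRatio M ^ n := by
  induction n generalizing ε x y with
  | zero =>
    obtain ⟨⟨hx0, hx1⟩, -⟩ := hx
    obtain ⟨⟨hy0, hy1⟩, -⟩ := hy
    rw [pow_zero, abs_le]
    constructor <;> linarith
  | succ n ih =>
    have hN0 : N ≠ 0 := by omega
    rw [mem_fundInterval_succ_iff hN0] at hx hy
    obtain ⟨hx01, -, hx0, hTx⟩ := hx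
    obtain ⟨hy01, -, hy0, hTy⟩ := hy
    have lower_bound : ∀ {z}, z ∈ fundInterval N (n + 1) (fun i => ε (i + 1)) →
        (N : ℝ) / (M + 1) < z := fun hz =>
      div_lt_of_digit_zero_le hz.1.1 ((hz.2.2 0 n.succ_pos).trans_le (hε 1 (by omega)))
    have hε0 : (N : ℝ) ≤ ε 0 := by exact_mod_cast hx0 ▸ le_digit_zero hx01
    have hxe : x = N / (ε 0 + TN N x) := hx0 ▸ eq_div_digit_zero_add_TN hN0 hx01.1.ne'
    have hye : y = N / (ε 0 + TN N y) := hy0 ▸ eq_div_digit_zero_add_TN hN0 hy01.1.ne'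
    calc |x - y| = |N / (ε 0 + TN N x) - N / (ε 0 + TN N y)| := by rw [← hxe, ← hye]
      _ ≤ contractionRatio M * |TN N x - TN N y| :=
          abs_div_add_sub_div_add_le hN hε0 (lower_bound hTx) (lower_bound hTy)
      _ ≤ contractionRatio M * contractionRatio M ^ n := by
          gcongr
          · exact (contractionRatio_pos M).le
          · exact ih (fun i hi => hε (i + 1) (by omega)) hTx hTy
      _ = contractionRatio M ^ (n + 1) := (pow_succ' _ _).symm

lemma mem_fundInterval_of_le_of_le {N : ℕ} (hN : N ≠ 0) {n : ℕ} {ε : ℕ → ℤ} {a b z : ℝ}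
    (ha : a ∈ fundInterval N n ε) (hb : b ∈ fundInterval N n ε) (hz : Irrational z)
    (haz : a ≤ z) (hzb : z ≤ b) : z ∈ fundInterval N n ε := by
  induction n generalizing ε a b z with
  | zero =>
    exact ⟨⟨ha.1.1.trans_le haz, hzb.trans_lt hb.1.2⟩, hz, fun i hi => absurd hi i.not_lt_zero⟩
  | succ n ih =>
    rw [mem_fundInterval_succ_iff hN] at ha hb ⊢
    obtain ⟨⟨ha0, -⟩, -, hda, hTa⟩ := ha
    obtain ⟨⟨hb0, hb1⟩, -, hdb, hTb⟩ := hb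
    have hz0 : 0 < z := ha0.trans_le haz
    have hdz : digit N 0 z = ε 0 :=
      le_antisymm (hda ▸ digit_zero_antitone ha0 haz) (hdb ▸ digit_zero_antitone hz0 hzb)
    have hNz : (N : ℝ) / b ≤ N / z := div_le_div_of_nonneg_left (Nat.cast_nonneg N) hz0 hzb
    have hNa : (N : ℝ) / z ≤ N / a := div_le_div_of_nonneg_left (Nat.cast_nonneg N) ha0 haz
    refine ⟨⟨hz0, hzb.trans_lt hb1⟩, hz, hdz, ih hTb hTa (irrational_TN hN hz0.ne' hz) ?_ ?_⟩
    · rw [TN_eq_sub_digit hb0.ne', TN_eq_sub_digit hz0.ne', hdb, hdz]; linarith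
    · rw [TN_eq_sub_digit hz0.ne', TN_eq_sub_digit ha0.ne', hda, hdz]; linarith

lemma ediam_le_volume_of_irrational_mem {S : Set ℝ}
    (hS : ∀ a ∈ S, ∀ b ∈ S, ∀ z, Irrational z → a ≤ z → z ≤ b → z ∈ S) :
    ediam S ≤ volume S := by
  refine ediam_le fun x hx y hy => ?_
  wlog hxy : x ≤ y generalizing x y
  · rw [edist_comm]; exact this y hy x hx (le_of_not_ge hxy)
  calc edist x y = volume (Ioo x y \ range ((↑) : ℚ → ℝ)) := by
        rw [measure_sdiff_null ((countable_range _).measure_zero _), Real.volume_Ioo,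
          edist_dist, Real.dist_eq, abs_sub_comm, abs_of_nonneg (sub_nonneg.2 hxy)]
    _ ≤ volume S := measure_mono fun z hz => hS x hx y hy z hz.2 hz.1.1.le hz.1.2.le

def padWord {α : Type*} (d : α) {n : ℕ} (w : Fin n → α) (i : ℕ) : α :=
  if h : i < n then w ⟨i, h⟩ else d

lemma padWord_snoc {α : Type*} (d : α) {n : ℕ} (w : Fin n → α) (k : α) :
    padWord d (Fin.snoc w k : Fin (n + 1) → α) = Function.update (padWord d w) n k := by
  funext i
  rcases lt_trichotomy i n with hi | rfl | hi
  · simp [padWord, hi, Nat.lt_succ_of_lt hi, Fin.snoc, hi.ne]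
  · simp [padWord, Fin.snoc]
  · simp [padWord, hi.ne', show ¬ i < n by omega, show ¬ i < n + 1 by omega]

lemma padWord_mem {α : Type*} {A : Finset α} {d : α} (hd : d ∈ A) {n : ℕ} (w : Fin n → A)
    (i : ℕ) : padWord d (fun j => (w j : α)) i ∈ A := by
  unfold padWord
  split_ifs
  exacts [(w _).2, hd]

lemma sum_padWord_le {α : Type*} {A : Finset α} {d : α} (hd : d ∈ A) (F : ℕ → (ℕ → α) → ℝ)
    (hF : ∀ n ε, (∀ i, ε i ∈ A) → ∑ k ∈ A, F (n + 1) (Function.update ε n k) ≤ F n ε) (n : ℕ) :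
    ∑ w : Fin n → A, F n (padWord d fun i => w i) ≤ F 0 fun _ => d := by
  induction n with
  | zero =>
    rw [Fintype.sum_unique]
    exact le_of_eq (congrArg (F 0) (funext fun i => dif_neg i.not_lt_zero))
  | succ n ih =>
    calc ∑ w : Fin (n + 1) → A, F (n + 1) (padWord d fun i => w i)
        = ∑ w : Fin n → A, ∑ k : A, F (n + 1) (Function.update (padWord d fun i => w i) n k) := by
          rw [← (Fin.snocEquiv fun _ => A).sum_comp, Fintype.sum_prod_type, Finset.sum_comm]
          refine Finset.sum_congr rfl fun w _ => Finset.sum_congr rfl fun k _ => ?_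
          rw [← padWord_snoc]
          exact congrArg (fun v => F (n + 1) (padWord d v)) (Fin.comp_snoc Subtype.val w k)
      _ ≤ ∑ w : Fin n → A, F n (padWord d fun i => w i) := by
          gcongr with w
          rw [Finset.sum_coe_sort A fun k => F (n + 1) (Function.update _ n k)]
          exact hF n _ (padWord_mem hd w)
      _ ≤ F 0 fun _ => d := ih

lemma volume_fundInterval_zero (N : ℕ) (ε : ℕ → ℤ) : volume (fundInterval N 0 ε) = 1 := by
  have : fundInterval N 0 ε = Ioo 0 1 \ range ((↑) : ℚ → ℝ) := by
    ext x
    simp [fundInterval, Irrational]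
  rw [this, measure_sdiff_null ((countable_range _).measure_zero _), Real.volume_Ioo]
  norm_num

lemma volume_fundInterval_ne_top (N n : ℕ) (ε : ℕ → ℤ) : volume (fundInterval N n ε) ≠ ⊤ :=
  ne_top_of_le_ne_top (by simp [Real.volume_Ioo]) (measure_mono fun _ hx => hx.1)

lemma ediam_fundInterval_le_volume {N : ℕ} (hN : N ≠ 0) (n : ℕ) (ε : ℕ → ℤ) :
    ediam (fundInterval N n ε) ≤ volume (fundInterval N n ε) :=
  ediam_le_volume_of_irrational_mem fun _ ha _ hb _ hz haz hzb =>
    mem_fundInterval_of_le_of_le hN ha hb hz haz hzb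

lemma EM_subset_iUnion_fundInterval (N M n : ℕ) :
    EM N M ⊆ ⋃ w : Fin n → Finset.Icc (N : ℤ) M, fundInterval N n (padWord N fun i => w i) :=
  fun x hx => mem_iUnion.2
    ⟨fun i => ⟨digit N i x, Finset.mem_Icc.2 (hx.2.2 i)⟩, hx.1, hx.2.1, fun i hi => by
      simp [padWord, hi]⟩

lemma dimH_le_ofReal_of_hausdorffMeasure_ne_top {X : Type*} [EMetricSpace X]
    [MeasurableSpace X] [BorelSpace X] {S : Set X} {d : ℝ} (hd : 0 ≤ d) (h : μH[d] S ≠ ⊤) :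
    dimH S ≤ ENNReal.ofReal d :=
  dimH_le_of_hausdorffMeasure_ne_top (d := d.toNNReal) (by rwa [Real.coe_toNNReal d hd])

lemma ediam_fundInterval_le {N M : ℕ} (hN : 1 ≤ N) {n : ℕ} {ε : ℕ → ℤ}
    (hε : ∀ i ≤ n, ε i ≤ M) :
    ediam (fundInterval N (n + 1) ε) ≤ ENNReal.ofReal (contractionRatio M ^ n) :=
  ediam_le fun x hx y hy => by
    rw [edist_dist, Real.dist_eq]
    exact ENNReal.ofReal_le_ofReal (abs_sub_le_of_mem_fundInterval hN hε hx hy)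

lemma sum_ediam_fundInterval_rpow_le_one {N M : ℕ} (hN : N ≠ 0) (hNM : N ≤ M) {s : ℝ}
    (hs : 0 ≤ s) (h : ∀ n : ℕ, ∀ ε : ℕ → ℤ, (∀ i, (N : ℤ) ≤ ε i ∧ ε i ≤ (M : ℤ)) →
      ∑ k ∈ Finset.Icc (N : ℤ) (M : ℤ),
          (volume (fundInterval N (n + 1) (Function.update ε n k))).toReal ^ s ≤
        (volume (fundInterval N n ε)).toReal ^ s) (n : ℕ) :
    ∑ w : Fin n → Finset.Icc (N : ℤ) M,
      ediam (fundInterval N n (padWord N fun i => w i)) ^ s ≤ 1 := by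
  have hmass := sum_padWord_le (Finset.left_mem_Icc.2 (by exact_mod_cast hNM))
    (fun n ε => (volume (fundInterval N n ε)).toReal ^ s)
    (fun n ε hε => h n ε fun i => Finset.mem_Icc.1 (hε i)) n
  rw [volume_fundInterval_zero, ENNReal.toReal_one, Real.one_rpow] at hmass
  calc ∑ w : Fin n → Finset.Icc (N : ℤ) M, ediam (fundInterval N n (padWord N fun i => w i)) ^ s
      ≤ ∑ w : Fin n → Finset.Icc (N : ℤ) M,
          ENNReal.ofReal ((volume (fundInterval N n (padWord N fun i => w i))).toReal ^ s) := by
        gcongr with w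
        rw [← ENNReal.ofReal_rpow_of_nonneg ENNReal.toReal_nonneg hs,
          ENNReal.ofReal_toReal (volume_fundInterval_ne_top _ _ _)]
        exact ENNReal.rpow_le_rpow (ediam_fundInterval_le_volume hN _ _) hs
    _ ≤ 1 := by
        rw [← ENNReal.ofReal_sum_of_nonneg fun _ _ => by positivity]
        exact ENNReal.ofReal_le_one.2 hmass

/-- Covering argument for `E_M`: if for every `n ≥ 1` and every admissible
word `(ε_1, …, ε_{n-1}) ∈ {N, …, M}^{n-1}` one has
`|I_{n-1}(ε_1, …, ε_{n-1})|^s ≥ ∑_{k=N}^{M} |I_n(ε_1, …, ε_{n-1}, k)|^s`,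
then `dim_H(E_M) ≤ s`.  (Here the word of length `n` is stated via `n ↦ n+1`:
the parent interval has order `n` and its children order `n+1`, with the appended
digit placed at position `n` via `Function.update`.) -/
theorem stmt_16 (N M : ℕ) (hN : 1 ≤ N) (hNM : N ≤ M) (s : ℝ) (hs : s ∈ Set.Ioo (0 : ℝ) 1)
    (h : ∀ n : ℕ, ∀ ε : ℕ → ℤ, (∀ i, (N : ℤ) ≤ ε i ∧ ε i ≤ (M : ℤ)) →
      ∑ k ∈ Finset.Icc (N : ℤ) (M : ℤ),
          (volume (fundInterval N (n + 1) (Function.update ε n k))).toReal ^ s ≤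
        (volume (fundInterval N n ε)).toReal ^ s) :
    dimH (EM N M) ≤ ENNReal.ofReal s := by
  have hNA : (N : ℤ) ∈ Finset.Icc (N : ℤ) M := Finset.left_mem_Icc.2 (by exact_mod_cast hNM)
  have hr : Tendsto (fun n => ENNReal.ofReal (contractionRatio M ^ n)) atTop (𝓝 0) := by
    simpa using ENNReal.tendsto_ofReal (tendsto_pow_atTop_nhds_zero_of_lt_one
      (contractionRatio_pos M).le (contractionRatio_lt_one M))
  have hμH : μH[s] (EM N M) ≤ 1 :=
    (Measure.hausdorffMeasure_le_liminf_sum s (EM N M) _ hr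
      (fun n (w : Fin (n + 1) → Finset.Icc (N : ℤ) M) =>
        fundInterval N (n + 1) (padWord N fun i => w i))
      (Eventually.of_forall fun n w =>
        ediam_fundInterval_le hN fun i _ => (Finset.mem_Icc.1 (padWord_mem hNA w i)).2)
      (Eventually.of_forall fun n => EM_subset_iUnion_fundInterval N M (n + 1))).trans
      (liminf_le_of_frequently_le' (Frequently.of_forall fun n =>
        sum_ediam_fundInterval_rpow_le_one (by omega) hNM hs.1.le h (n + 1)))
  exact dimH_le_ofReal_of_hausdorffMeasure_ne_top hs.1.le (hμH.trans_lt ENNReal.one_lt_top).ne
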